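/- arXiv:2502.15061 — 4 statements merged into one kernel-verified Lean document; each statement's English description precedes it below -/
import Mathlib

section
/- Let μ be a nonzero exterior p-form (1 ≤ p ≤ n) on an n-dimensional real vector space V, let D be its divisibility space, and set s = n − dim D. Then s ≠ p − 1, s ≤ p, and s = p holds if and only if μ is decomposable. -/
set_option synthInstance.maxHeartbeats 1000000
set_option maxHeartbeats 1000000

/-- The subspace of functionals `ξ ∈ V*` dividing `μ`, i.e. with `ξ ∧ μ = 0`. -/
noncomputable def divForms (V : Type*) [AddCommGroup V] [Module ℝ V]
    (μ : ExteriorAlgebra ℝ (Module.Dual ℝ V)) : Submodule ℝ (Module.Dual ℝ V) :=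
  LinearMap.ker ((LinearMap.mulRight ℝ μ).comp (ExteriorAlgebra.ι ℝ))

/-- The divisibility space of `μ`: all `v ∈ V` annihilated by every functional `ξ`
with `ξ ∧ μ = 0`. -/
noncomputable def divSpace (V : Type*) [AddCommGroup V] [Module ℝ V]
    (μ : ExteriorAlgebra ℝ (Module.Dual ℝ V)) : Submodule ℝ V :=
  (divForms V μ).dualCoannihilator

/-!
Write `W = divForms V μ`; by duality `s = dim W`. If `f₁, …, f_k` is a basis of `W`, contracting
`μ` successively against functionals dual to the `fᵢ` gives `μ = f₁ ∧ ⋯ ∧ f_k ∧ ν` with `ν` of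
degree `p - k`. Comparing degrees yields `k ≤ p`, and for `k = p` the cofactor `ν` is a scalar,
so `μ` is decomposable. For `k = p - 1` the cofactor is a covector `η` with `η ∧ μ = 0`; then
`η ∈ W` is a combination of the `fᵢ` and `μ = 0`. Conversely, the factors of a nonzero
decomposable `p`-form are linearly independent and lie in `W`, so `k ≥ p`.
-/

open Module

namespace Submodule

variable {K M : Type*} [Field K] [AddCommGroup M] [Module K M]

theorem exists_linearIndependent_span_eq (W : Submodule K M) [FiniteDimensional K W] :
    ∃ f : Fin (finrank K W) → M, LinearIndependent K f ∧ span K (Set.range f) = W := by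
  let b := finBasis K W
  refine ⟨W.subtype ∘ b, b.linearIndependent.map' _ W.ker_subtype, ?_⟩
  rw [Set.range_comp, span_image, b.span_eq, map_top, range_subtype]

theorem exists_dual_eq_one_of_notMem {p : Submodule K M} {x : M} (hx : x ∉ p) :
    ∃ d : Dual K M, d x = 1 ∧ ∀ y ∈ p, d y = 0 := by
  obtain ⟨g, hgx, hgp⟩ := exists_dual_map_eq_bot_of_notMem hx inferInstance
  refine ⟨(g x)⁻¹ • g, by simp [hgx], fun y hy => ?_⟩
  have : g y ∈ p.map g := mem_map_of_mem hy
  simp_all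

end Submodule

namespace ExteriorAlgebra

section CommRing

variable {R M : Type*} [CommRing R] [AddCommGroup M] [Module R M]

theorem mem_exteriorPower_zero {x : ExteriorAlgebra R M} :
    x ∈ ⋀[R]^0 M ↔ ∃ r : R, algebraMap R _ r = x := by
  rw [exteriorPower, pow_zero, Submodule.mem_one]

theorem mem_exteriorPower_one {x : ExteriorAlgebra R M} :
    x ∈ ⋀[R]^1 M ↔ ∃ m : M, ι R m = x := by
  rw [exteriorPower, pow_one, LinearMap.mem_range]

theorem disjoint_exteriorPower {m n : ℕ} (h : m ≠ n) : Disjoint (⋀[R]^m M) (⋀[R]^n M) :=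
  (DirectSum.Decomposition.isInternal (fun i : ℕ ↦ ⋀[R]^i M)).submodule_iSupIndep.pairwiseDisjoint h

theorem contractLeft_mem_exteriorPower (d : Dual R M) {n : ℕ} {x : ExteriorAlgebra R M}
    (hx : x ∈ ⋀[R]^n M) : CliffordAlgebra.contractLeft d x ∈ ⋀[R]^(n - 1) M := by
  induction hx using Submodule.pow_induction_on_left' with
  | algebraMap r => simp [CliffordAlgebra.contractLeft_algebraMap]
  | add x y i _ _ ihx ihy => rw [map_add]; exact add_mem ihx ihy
  | mem_mul m hm i x hx ih =>
    obtain ⟨a, rfl⟩ := hm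
    rw [CliffordAlgebra.contractLeft_ι_mul]
    refine sub_mem (Submodule.smul_mem _ _ (by simpa using hx)) ?_
    rcases i with _ | i
    · obtain ⟨r, rfl⟩ := mem_exteriorPower_zero.1 hx
      simp [CliffordAlgebra.contractLeft_algebraMap]
    · simpa [pow_succ'] using Submodule.mul_mem_mul (LinearMap.mem_range_self (ι R) a) ih

theorem eq_ι_mul_contractLeft {d : Dual R M} {a : M} (ha : d a = 1)
    {μ : ExteriorAlgebra R M} (hμ : ι R a * μ = 0) :
    μ = ι R a * CliffordAlgebra.contractLeft d μ := by
  have := CliffordAlgebra.contractLeft_ι_mul d a μ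
  rw [hμ, map_zero, ha, one_smul] at this
  exact sub_eq_zero.1 this.symm

theorem ι_mul_contractLeft_eq_zero {d : Dual R M} {b : M} (hb : d b = 0)
    {μ : ExteriorAlgebra R M} (hμ : ι R b * μ = 0) :
    ι R b * CliffordAlgebra.contractLeft d μ = 0 := by
  have := CliffordAlgebra.contractLeft_ι_mul d b μ
  rwa [hμ, map_zero, hb, zero_smul, zero_sub, eq_comm, neg_eq_zero] at this

theorem ι_mul_ιMulti {n : ℕ} (x : M) (v : Fin n → M) :
    ι R x * ιMulti R n v = ιMulti R (n + 1) (Fin.cons x v) := by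
  rw [ιMulti_succ_apply]
  rfl

theorem ιMulti_mul_ι {n : ℕ} (v : Fin n → M) (x : M) :
    ιMulti R n v * ι R x = ιMulti R (n + 1) (Fin.snoc v x) := by
  rw [ιMulti_apply, ιMulti_apply, List.ofFn_succ']
  simp

end CommRing

section Field

variable {K M : Type*} [Field K] [AddCommGroup M] [Module K M]

theorem exists_eq_ιMulti_mul_of_ι_mul_eq_zero {k : ℕ} {f : Fin k → M}
    (hf : LinearIndependent K f) {m : ℕ} {μ : ExteriorAlgebra K M} (hμ : μ ∈ ⋀[K]^m M)
    (hfμ : ∀ i, ι K (f i) * μ = 0) : ∃ ν ∈ ⋀[K]^(m - k) M, μ = ιMulti K k f * ν := by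
  induction k generalizing m μ with
  | zero => exact ⟨μ, hμ, by simp⟩
  | succ k ih =>
    obtain ⟨hf_tail, hf_zero⟩ := linearIndependent_finSucc.1 hf
    obtain ⟨d, hd_zero, hd_tail⟩ := Submodule.exists_dual_eq_one_of_notMem hf_zero
    obtain ⟨ν, hν, hμν⟩ := ih hf_tail (contractLeft_mem_exteriorPower d hμ) fun i =>
      ι_mul_contractLeft_eq_zero (hd_tail _ (Submodule.subset_span ⟨i, rfl⟩)) (hfμ i.succ)
    refine ⟨ν, by rwa [Nat.sub_sub, Nat.add_comm] at hν, ?_⟩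
    rw [ιMulti_succ_apply, mul_assoc]
    exact (eq_ι_mul_contractLeft hd_zero (hfμ 0)).trans (by rw [hμν]; rfl)

end Field

end ExteriorAlgebra

open ExteriorAlgebra Submodule

section divForms

variable {V : Type*} [AddCommGroup V] [Module ℝ V] {μ : ExteriorAlgebra ℝ (Dual ℝ V)}

theorem mem_divForms {ξ : Dual ℝ V} : ξ ∈ divForms V μ ↔ ι ℝ ξ * μ = 0 := Iff.rfl

theorem span_le_divForms_of_eq_ιMulti {p : ℕ} {ξ : Fin p → Dual ℝ V} (h : μ = ιMulti ℝ p ξ) :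
    span ℝ (Set.range ξ) ≤ divForms V μ := by
  rw [span_le]
  rintro _ ⟨i, rfl⟩
  rw [SetLike.mem_coe, mem_divForms, h, ιMulti_apply]
  exact ι_mul_prod_list ξ i

variable [FiniteDimensional ℝ V]

theorem finrank_sub_finrank_divSpace (μ : ExteriorAlgebra ℝ (Dual ℝ V)) :
    finrank ℝ V - finrank ℝ (divSpace V μ) = finrank ℝ (divForms V μ) := by
  have := Subspace.finrank_add_finrank_dualCoannihilator_eq (divForms V μ)
  rw [divSpace]
  omega

theorem exists_eq_ιMulti_mul_of_mem_exteriorPower {p : ℕ} (hμ : μ ∈ ⋀[ℝ]^p (Dual ℝ V)) :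
    ∃ f : Fin (finrank ℝ (divForms V μ)) → Dual ℝ V,
      LinearIndependent ℝ f ∧ span ℝ (Set.range f) = divForms V μ ∧
      ∃ ν ∈ ⋀[ℝ]^(p - finrank ℝ (divForms V μ)) (Dual ℝ V), μ = ιMulti ℝ _ f * ν := by
  obtain ⟨f, hf, hspan⟩ := (divForms V μ).exists_linearIndependent_span_eq
  refine ⟨f, hf, hspan, exists_eq_ιMulti_mul_of_ι_mul_eq_zero hf hμ fun i => ?_⟩
  exact mem_divForms.1 (hspan ▸ subset_span ⟨i, rfl⟩)

theorem exists_eq_smul_ιMulti_of_le_finrank_divForms {p : ℕ} (hμ : μ ∈ ⋀[ℝ]^p (Dual ℝ V))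
    (hp : p ≤ finrank ℝ (divForms V μ)) :
    ∃ (f : Fin (finrank ℝ (divForms V μ)) → Dual ℝ V) (r : ℝ), μ = r • ιMulti ℝ _ f := by
  obtain ⟨f, -, -, ν, hν, hμν⟩ := exists_eq_ιMulti_mul_of_mem_exteriorPower hμ
  rw [Nat.sub_eq_zero_of_le hp] at hν
  obtain ⟨r, rfl⟩ := mem_exteriorPower_zero.1 hν
  exact ⟨f, r, hμν.trans (by rw [← Algebra.commutes, ← Algebra.smul_def])⟩

theorem finrank_divForms_le {p : ℕ} (hμ : μ ∈ ⋀[ℝ]^p (Dual ℝ V)) (hμ0 : μ ≠ 0) :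
    finrank ℝ (divForms V μ) ≤ p := by
  by_contra! hp
  obtain ⟨f, r, hμf⟩ := exists_eq_smul_ιMulti_of_le_finrank_divForms hμ hp.le
  have hμk := smul_mem _ r (ιMulti_range ℝ _ ⟨f, rfl⟩)
  rw [← hμf] at hμk
  exact hμ0 (disjoint_def.1 (disjoint_exteriorPower hp.ne) μ hμ hμk)

theorem exists_eq_ιMulti_of_finrank_divForms_eq {p : ℕ} (hp : 1 ≤ p)
    (hμ : μ ∈ ⋀[ℝ]^p (Dual ℝ V)) (hk : finrank ℝ (divForms V μ) = p) :
    ∃ ξ : Fin p → Dual ℝ V, μ = ιMulti ℝ p ξ := by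
  subst hk
  obtain ⟨f, r, hμf⟩ := exists_eq_smul_ιMulti_of_le_finrank_divForms hμ le_rfl
  let i : Fin _ := ⟨0, hp⟩
  refine ⟨Function.update f i (r • f i), ?_⟩
  rwa [AlternatingMap.map_update_smul, Function.update_eq_self]

theorem finrank_divForms_ne_sub_one {p : ℕ} (hp : 1 ≤ p) (hμ : μ ∈ ⋀[ℝ]^p (Dual ℝ V))
    (hμ0 : μ ≠ 0) : finrank ℝ (divForms V μ) ≠ p - 1 := by
  intro hk
  obtain ⟨f, -, hspan, ν, hν, hμν⟩ := exists_eq_ιMulti_mul_of_mem_exteriorPower hμ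
  rw [show p - finrank ℝ (divForms V μ) = 1 by omega] at hν
  obtain ⟨η, rfl⟩ := mem_exteriorPower_one.1 hν
  rw [ιMulti_mul_ι] at hμν
  have hη : η ∈ span ℝ (Set.range f) := by
    rw [hspan, mem_divForms, hμν, ι_mul_ιMulti]
    exact ιMulti_eq_zero_of_not_inj fun h => Fin.last_pos.ne (h (by simp))
  exact hμ0 (hμν.trans ((ιMulti ℝ _).map_linearDependent _ fun h =>
    (linearIndependent_finSnoc.1 h).2 hη))

theorem le_finrank_divForms_of_eq_ιMulti {p : ℕ} {ξ : Fin p → Dual ℝ V} (hμ0 : μ ≠ 0)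
    (h : μ = ιMulti ℝ p ξ) : p ≤ finrank ℝ (divForms V μ) := by
  have hξ : LinearIndependent ℝ ξ := by
    by_contra hξ
    exact hμ0 (h.trans ((ιMulti ℝ p).map_linearDependent ξ hξ))
  calc p = finrank ℝ (span ℝ (Set.range ξ)) := by rw [finrank_span_eq_card hξ, Fintype.card_fin]
    _ ≤ finrank ℝ (divForms V μ) := finrank_mono (span_le_divForms_of_eq_ιMulti h)

end divForms

theorem stmt2_general (V : Type*) [AddCommGroup V] [Module ℝ V] [FiniteDimensional ℝ V]
    (p : ℕ) (hp1 : 1 ≤ p)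
    (μ : ExteriorAlgebra ℝ (Module.Dual ℝ V))
    (hμdeg : μ ∈ ⋀[ℝ]^p (Module.Dual ℝ V)) (hμ0 : μ ≠ 0) :
    Module.finrank ℝ V - Module.finrank ℝ (divSpace V μ) ≠ p - 1 ∧
    Module.finrank ℝ V - Module.finrank ℝ (divSpace V μ) ≤ p ∧
    (Module.finrank ℝ V - Module.finrank ℝ (divSpace V μ) = p ↔
      ∃ ξ : Fin p → Module.Dual ℝ V,
        μ = (List.ofFn fun i => ExteriorAlgebra.ι ℝ (ξ i)).prod) := by
  simp only [finrank_sub_finrank_divSpace, ← ιMulti_apply]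
  refine ⟨finrank_divForms_ne_sub_one hp1 hμdeg hμ0, finrank_divForms_le hμdeg hμ0,
    exists_eq_ιMulti_of_finrank_divForms_eq hp1 hμdeg, ?_⟩
  rintro ⟨ξ, hξ⟩
  exact (finrank_divForms_le hμdeg hμ0).antisymm (le_finrank_divForms_of_eq_ιMulti hμ0 hξ)

/-- For a nonzero exterior `p`-form `μ` (`1 ≤ p ≤ n`) on an `n`-dimensional
real vector space `V`, with `D` its divisibility space and `s = n - dim D`, one has
`s ≠ p - 1`, `s ≤ p`, and `s = p` iff `μ` is decomposable. -/
theorem stmt2 (V : Type*) [AddCommGroup V] [Module ℝ V] [FiniteDimensional ℝ V]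
    (p : ℕ) (hp1 : 1 ≤ p) (hpn : p ≤ Module.finrank ℝ V)
    (μ : ExteriorAlgebra ℝ (Module.Dual ℝ V))
    (hμdeg : μ ∈ ⋀[ℝ]^p (Module.Dual ℝ V)) (hμ0 : μ ≠ 0) :
    Module.finrank ℝ V - Module.finrank ℝ (divSpace V μ) ≠ p - 1 ∧
    Module.finrank ℝ V - Module.finrank ℝ (divSpace V μ) ≤ p ∧
    (Module.finrank ℝ V - Module.finrank ℝ (divSpace V μ) = p ↔
      ∃ ξ : Fin p → Module.Dual ℝ V,
        μ = (List.ofFn fun i => ExteriorAlgebra.ι ℝ (ξ i)).prod) :=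
  stmt2_general V p hp1 μ hμdeg hμ0
end

section
/- Let μ be a nonzero exterior p-form (1 ≤ p ≤ n) on an n-dimensional real vector space V, let D be its divisibility space, let D′ = {ξ ∈ V* : ξ ∧ μ = 0} (a subspace of V*, the annihilator of D), and let s = dim D′. Then for every basis ξ¹, …, ξⁿ of V* whose first s members ξ¹, …, ξˢ form a basis of D′, there exists an exterior (p−s)-form ζ on V which is a linear combination of (p−s)-fold wedge products of functionals from the set {ξ^{s+1}, …, ξⁿ}, such that μ = ξ¹ ∧ … ∧ ξˢ ∧ ζ, and this ζ is indivisible (ξ ∧ ζ ≠ 0 for every nonzero ξ ∈ V*). -/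
/-! Expand `μ` in the monomial basis `ξ^S = ξ^{s₁} ∧ ⋯ ∧ ξ^{sₖ}` (`s₁ < ⋯ < sₖ`). Since
`ξ^i ∧ ξ^S` is `±ξ^{S ∪ {i}}` for `i ∉ S` and `0` otherwise, `ξ^i ∧ μ = 0` forces every monomial
of `μ` to contain `i`. Hence every monomial contains `A = {1, …, s}`, and `μ = ξ^A ∧ ζ` where
`ζ` involves only monomials disjoint from `A`. If `ξ ∧ ζ = 0`, then `ξ ∧ μ = ±ξ^A ∧ ξ ∧ ζ = 0`,
so `ξ ∈ D′ = span {ξ^i | i ∈ A}` by counting dimensions; writing `ξ = ∑ rᵢ ξ^i`, the coefficient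
of `ξ^{T ∪ {i}}` in `ξ ∧ ζ` is `±rᵢ ζ_T`, so every `rᵢ` vanishes. -/

open Module Set Set.powersetCard

lemma List.prod_ofFn_ite_val_lt {α : Type*} [Monoid α] {n s : ℕ} (h : s ≤ n) (f : Fin n → α) :
    (List.ofFn fun i : Fin n => if (i : ℕ) < s then f i else 1).prod =
      (List.ofFn fun j : Fin s => f (Fin.castLE h j)).prod := by
  obtain ⟨m, rfl⟩ := Nat.exists_eq_add_of_le h
  simp [List.ofFn_add]

lemma Module.Basis.span_image_eq_of_finrank_eq {K V ι : Type*} [Field K] [AddCommGroup V]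
    [Module K V] (b : Basis ι K V) {A : Finset ι} {D : Submodule K V} [FiniteDimensional K D]
    (hA : ∀ i ∈ A, b i ∈ D) (hD : finrank K D = A.card) : Submodule.span K (b '' A) = D := by
  refine Submodule.eq_of_le_of_finrank_le (Submodule.span_le.2 ?_) ?_
  · rintro _ ⟨i, hi, rfl⟩
    exact hA i hi
  · rw [Set.image_eq_range, hD]
    exact ((finrank_span_eq_card (b.linearIndependent.comp _ Subtype.val_injective)).trans
      (by simp)).ge

namespace ExteriorAlgebra

variable {R M : Type*} [CommRing R] [AddCommGroup M] [Module R M]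

lemma ι_mul_ιMulti_comm (x : M) {k : ℕ} (v : Fin k → M) :
    ι R x * ιMulti R k v = (-1 : R) ^ k • (ιMulti R k v * ι R x) := by
  induction k with
  | zero => simp
  | succ k ih =>
    rw [ιMulti_succ_apply, ← mul_assoc, eq_neg_of_add_eq_zero_left (ι_add_mul_swap x (v 0)),
      neg_mul, mul_assoc, ih, mul_smul_comm, pow_succ, mul_neg_one, neg_smul, mul_assoc]

section

variable {I : Type*} [LinearOrder I] (b : Basis I R M)

lemma basis_eq_prod_ofFn {k : ℕ} (s : Finset I) (h : s.card = k) :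
    b.ExteriorAlgebra s = (List.ofFn fun j => ι R (b (s.orderEmbOfFin h j))).prod := by
  rw [basis_apply_ofCard b h, ιMulti_family, ιMulti_apply]
  rfl

lemma basis_singleton (i : I) : b.ExteriorAlgebra {i} = ι R (b i) := by
  have hi : ∀ j, ({i} : Finset I).orderEmbOfFin rfl j = i := fun j =>
    Finset.mem_singleton.1 (Finset.orderEmbOfFin_mem _ _ j)
  simp [basis_eq_prod_ofFn _ _ rfl, hi]

lemma exists_basis_mul_basis_of_disjoint {s t : Finset I} (h : Disjoint s t) :
    ∃ ε : ℤˣ, b.ExteriorAlgebra s * b.ExteriorAlgebra t = ε • b.ExteriorAlgebra (s ∪ t) := by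
  have := basis_mul_of_disjoint b (ofCard rfl : powersetCard I s.card) (ofCard rfl) h
  rw [← Finset.disjUnion_eq_union s t h]
  exact ⟨_, this⟩

lemma repr_basis_mul_basis_of_ne {s t u : Finset I} (h : Disjoint s t → s ∪ t ≠ u) :
    b.ExteriorAlgebra.repr (b.ExteriorAlgebra s * b.ExteriorAlgebra t) u = 0 := by
  by_cases hst : Disjoint s t
  · obtain ⟨ε, hε⟩ := exists_basis_mul_basis_of_disjoint b hst
    simp [hε, h hst]
  · have := basis_mul_of_not_disjoint b (ofCard rfl : powersetCard I s.card)
      (ofCard rfl : powersetCard I t.card) hst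
    simp only [val_ofCard] at this
    simp [this]

lemma span_basis_card (n : ℕ) :
    Submodule.span R (b.ExteriorAlgebra '' {s | s.card = n}) = ⋀[R]^n M := by
  rw [← exteriorPower.ιMulti_family_span_fixedDegree_of_span R b.span_eq]
  congr 1
  ext x
  constructor
  · rintro ⟨s, hs, rfl⟩
    exact ⟨ofCard hs, (basis_apply_ofCard b hs).symm⟩
  · rintro ⟨s, rfl⟩
    exact ⟨s.val, s.prop, basis_apply_powersetCard b s⟩

lemma repr_ι_mul_of_notMem {i : I} {u : Finset I} (hi : i ∉ u) (x : ExteriorAlgebra R M) :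
    b.ExteriorAlgebra.repr (ι R (b i) * x) u = 0 := by
  suffices b.ExteriorAlgebra.coord u ∘ₗ LinearMap.mulLeft R (ι R (b i)) = 0 from
    LinearMap.congr_fun this x
  refine b.ExteriorAlgebra.ext fun t => ?_
  simpa [← basis_singleton] using
    repr_basis_mul_basis_of_ne b fun _ h =>
      hi (h ▸ Finset.mem_union_left t (Finset.mem_singleton_self i) :)

lemma exists_repr_ι_mul_of_mem {i : I} {u : Finset I} (hi : i ∈ u) :
    ∃ ε : ℤˣ, ∀ x : ExteriorAlgebra R M,
      b.ExteriorAlgebra.repr (ι R (b i) * x) u = ε • b.ExteriorAlgebra.repr x (u.erase i) := by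
  obtain ⟨ε, hε⟩ := exists_basis_mul_basis_of_disjoint b
    (Finset.disjoint_singleton_left.2 (Finset.notMem_erase i u))
  rw [← Finset.insert_eq, Finset.insert_erase hi] at hε
  refine ⟨ε, fun x => ?_⟩
  suffices b.ExteriorAlgebra.coord u ∘ₗ LinearMap.mulLeft R (ι R (b i)) =
      ε • b.ExteriorAlgebra.coord (u.erase i) from LinearMap.congr_fun this x
  refine b.ExteriorAlgebra.ext fun t => ?_
  rw [← basis_singleton]
  by_cases ht : t = u.erase i
  · subst ht
    simp [hε]
  · have : Disjoint {i} t → {i} ∪ t ≠ u := by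
      rintro hd rfl
      rw [← Finset.insert_eq, Finset.erase_insert (Finset.disjoint_singleton_left.1 hd)] at ht
      exact ht rfl
    simp [repr_basis_mul_basis_of_ne b this, Ne.symm ht]

lemma repr_eq_zero_of_ι_mul_eq_zero {i : I} {x : ExteriorAlgebra R M} (hx : ι R (b i) * x = 0)
    {s : Finset I} (hi : i ∉ s) : b.ExteriorAlgebra.repr x s = 0 := by
  obtain ⟨ε, hε⟩ := exists_repr_ι_mul_of_mem b (Finset.mem_insert_self i s)
  simpa [hx, Finset.erase_insert hi, smul_eq_zero_iff_eq] using (hε x).symm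

lemma exists_eq_basis_mul_of_subset {A : Finset I} {S : Set (Finset I)} (hS : ∀ s ∈ S, A ⊆ s)
    {x : ExteriorAlgebra R M} (hx : x ∈ Submodule.span R (b.ExteriorAlgebra '' S)) :
    ∃ ζ ∈ Submodule.span R (b.ExteriorAlgebra '' ((· \ A) '' S)),
      x = b.ExteriorAlgebra A * ζ := by
  induction hx using Submodule.span_induction with
  | mem _ h =>
    obtain ⟨s, hs, rfl⟩ := h
    obtain ⟨ε, hε⟩ :=
      exists_basis_mul_basis_of_disjoint b (Finset.disjoint_sdiff (s := A) (t := s))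
    rw [Finset.union_sdiff_of_subset (hS s hs)] at hε
    refine ⟨ε • b.ExteriorAlgebra (s \ A),
      Submodule.smul_of_tower_mem _ _ (Submodule.subset_span ⟨_, ⟨s, hs, rfl⟩, rfl⟩), ?_⟩
    rw [mul_smul_comm, hε, smul_smul, Int.units_mul_self, one_smul]
  | zero => exact ⟨0, Submodule.zero_mem _, (mul_zero _).symm⟩
  | add _ _ _ _ h₁ h₂ =>
    obtain ⟨ζ₁, hζ₁, rfl⟩ := h₁
    obtain ⟨ζ₂, hζ₂, rfl⟩ := h₂
    exact ⟨ζ₁ + ζ₂, Submodule.add_mem _ hζ₁ hζ₂, (mul_add _ _ _).symm⟩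
  | smul r _ _ h =>
    obtain ⟨ζ, hζ, rfl⟩ := h
    exact ⟨r • ζ, Submodule.smul_mem _ r hζ, (mul_smul_comm _ _ _).symm⟩

lemma exists_eq_basis_mul_of_ι_mul_eq_zero {p : ℕ} {A : Finset I} {x : ExteriorAlgebra R M}
    (hx : x ∈ ⋀[R]^p M) (hA : ∀ i ∈ A, ι R (b i) * x = 0) :
    ∃ ζ ∈ Submodule.span R (b.ExteriorAlgebra '' {t | t.card = p - A.card ∧ Disjoint A t}),
      x = b.ExteriorAlgebra A * ζ := by
  have hxA : x ∈ Submodule.span R (b.ExteriorAlgebra '' {s | s.card = p ∧ A ⊆ s}) := by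
    rw [← span_basis_card b, b.ExteriorAlgebra.mem_span_image] at hx
    refine b.ExteriorAlgebra.mem_span_image.2 fun s hs => ⟨hx hs, fun i hi => ?_⟩
    by_contra his
    exact Finsupp.mem_support_iff.1 hs (repr_eq_zero_of_ι_mul_eq_zero b (hA i hi) his)
  obtain ⟨ζ, hζ, rfl⟩ := exists_eq_basis_mul_of_subset b (fun s hs => hs.2) hxA
  refine ⟨ζ, Submodule.span_mono (Set.image_mono ?_) hζ, rfl⟩
  rintro _ ⟨s, ⟨hs, hAs⟩, rfl⟩
  exact ⟨by rw [Finset.card_sdiff_of_subset hAs, hs], Finset.disjoint_sdiff⟩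

lemma eq_zero_of_ι_mul_eq_zero [NoZeroDivisors R] {A : Finset I} {ξ : M}
    (hξ : ξ ∈ Submodule.span R (b '' A)) {ζ : ExteriorAlgebra R M}
    (hζ : ζ ∈ Submodule.span R (b.ExteriorAlgebra '' {t | Disjoint A t})) (hζ0 : ζ ≠ 0)
    (h : ι R ξ * ζ = 0) : ξ = 0 := by
  obtain ⟨t, ht⟩ := Finsupp.ne_iff.1 ((map_ne_zero_iff _ b.ExteriorAlgebra.repr.injective).2 hζ0)
  have htA : Disjoint A t := (b.ExteriorAlgebra.mem_span_image.1 hζ) (Finsupp.mem_support_iff.2 ht)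
  refine b.ext_elem fun i => by_contra fun hi => ?_
  rw [map_zero, Finsupp.zero_apply] at hi
  have hiA : i ∈ A := b.mem_span_image.1 hξ (Finsupp.mem_support_iff.2 hi)
  obtain ⟨ε, hε⟩ := exists_repr_ι_mul_of_mem b (Finset.mem_insert_self i t)
  -- `ℓ ξ'` is the coefficient of `ξ^{insert i t}` in `ξ' ∧ ζ`; on `b '' A` it only sees `b i`.
  let ℓ := b.ExteriorAlgebra.coord (insert i t) ∘ₗ LinearMap.mulRight R ζ ∘ₗ ι R
  have hℓ : Set.EqOn ℓ ((ε • b.ExteriorAlgebra.repr ζ t) • b.coord i : M →ₗ[R] R) (b '' A) := by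
    rintro _ ⟨j, hj, rfl⟩
    by_cases hji : j = i
    · subst hji
      simp [ℓ, hε, Finset.erase_insert (Finset.disjoint_left.1 htA hiA)]
    · have hjt : j ∉ insert i t := by
        simp [hji, Finset.disjoint_left.1 htA hj]
      simp [ℓ, repr_ι_mul_of_notMem b hjt, hji]
  have hcoef : ε • (b.ExteriorAlgebra.repr ζ t * b.repr ξ i) = 0 := by
    simpa [ℓ, h] using (LinearMap.eqOn_span hℓ hξ).symm
  exact mul_ne_zero ht hi ((smul_eq_zero_iff_eq ε).1 hcoef)

end

lemma basis_filter_lt_eq_prod_ofFn {n : ℕ} (b : Basis (Fin n) R M) {s : ℕ} (hsn : s ≤ n) :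
    b.ExteriorAlgebra {i | (i : ℕ) < s} =
      (List.ofFn fun i : Fin n => if (i : ℕ) < s then ι R (b i) else 1).prod := by
  have hcard : ({i | (i : ℕ) < s} : Finset (Fin n)).card = s := by
    simp [Fin.card_filter_val_lt, hsn]
  rw [basis_eq_prod_ofFn b _ hcard, List.prod_ofFn_ite_val_lt hsn]
  congr
  funext j
  rw [← Finset.orderEmbOfFin_unique hcard (by simp) (Fin.strictMono_castLE hsn)]

end ExteriorAlgebra

open ExteriorAlgebra

theorem stmt3_general (V : Type*) [AddCommGroup V] [Module ℝ V] [FiniteDimensional ℝ V]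
    (p : ℕ)
    (μ : ExteriorAlgebra ℝ (Module.Dual ℝ V))
    (hμdeg : μ ∈ ⋀[ℝ]^p (Module.Dual ℝ V)) (hμ0 : μ ≠ 0)
    (s : ℕ) (hs : s = Module.finrank ℝ (divForms V μ))
    (b : Module.Basis (Fin (Module.finrank ℝ V)) ℝ (Module.Dual ℝ V))
    (hb : ∀ i : Fin (Module.finrank ℝ V), (i : ℕ) < s → b i ∈ divForms V μ) :
    ∃ ζ : ExteriorAlgebra ℝ (Module.Dual ℝ V),
      ζ ∈ ⋀[ℝ]^(p - s) (Module.Dual ℝ V) ∧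
      ζ ∈ Submodule.span ℝ
        {z : ExteriorAlgebra ℝ (Module.Dual ℝ V) |
          ∃ g : Fin (p - s) → Fin (Module.finrank ℝ V),
            (∀ j, s ≤ ((g j : ℕ))) ∧
            z = (List.ofFn fun j => ExteriorAlgebra.ι ℝ (b (g j))).prod} ∧
      μ = (List.ofFn fun i : Fin (Module.finrank ℝ V) =>
            if (i : ℕ) < s then ExteriorAlgebra.ι ℝ (b i) else 1).prod * ζ ∧
      (∀ ξ : Module.Dual ℝ V, ξ ≠ 0 → ExteriorAlgebra.ι ℝ ξ * ζ ≠ 0) := by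
  set A : Finset (Fin (finrank ℝ V)) := {i | (i : ℕ) < s}
  have hsn : s ≤ finrank ℝ V :=
    hs ▸ Subspace.dual_finrank_eq (K := ℝ) (V := V) ▸ Submodule.finrank_le _
  have hAcard : A.card = s := by simp [A, Fin.card_filter_val_lt, hsn]
  have hAb : ∀ i ∈ A, b i ∈ divForms V μ := fun i hi => hb i (by simpa [A] using hi)
  have hAdiv : Submodule.span ℝ (b '' A) = divForms V μ :=
    b.span_image_eq_of_finrank_eq hAb (hAcard ▸ hs).symm
  obtain ⟨ζ, hζ, hμζ⟩ := exists_eq_basis_mul_of_ι_mul_eq_zero b hμdeg hAb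
  rw [hAcard] at hζ
  refine ⟨ζ, ?_, ?_, ?_, fun ξ hξ0 hξζ => hξ0 ?_⟩
  · rw [← span_basis_card b]
    exact Submodule.span_mono (Set.image_mono fun T hT => hT.1) hζ
  · refine Submodule.span_mono ?_ hζ
    rintro _ ⟨T, ⟨hT, hAT⟩, rfl⟩
    refine ⟨T.orderEmbOfFin hT, fun j => ?_, basis_eq_prod_ofFn b T hT⟩
    simpa [A] using Finset.disjoint_right.1 hAT (T.orderEmbOfFin_mem hT j)
  · rw [hμζ, basis_filter_lt_eq_prod_ofFn b hsn]
  · refine eq_zero_of_ι_mul_eq_zero b (hAdiv ▸ ?_)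
      (Submodule.span_mono (Set.image_mono fun T hT => hT.2) hζ) (by rintro rfl; simp [hμζ] at hμ0) hξζ
    show ι ℝ ξ * μ = 0
    rw [hμζ, ← mul_assoc, basis_apply_ofCard b hAcard, ι_mul_ιMulti_comm, smul_mul_assoc,
      mul_assoc, hξζ, mul_zero, smul_zero]

/-- For a nonzero exterior `p`-form `μ` (`1 ≤ p ≤ n`) on an `n`-dimensional
real vector space `V`, with `D′ = {ξ ∈ V* : ξ ∧ μ = 0}` of dimension `s`, and any basis
`ξ¹, …, ξⁿ` of `V*` whose first `s` members lie in (hence form a basis of) `D′`, there is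
an exterior `(p-s)`-form `ζ`, a linear combination of `(p-s)`-fold wedge products of the
functionals `ξ^{s+1}, …, ξⁿ`, with `μ = ξ¹ ∧ ⋯ ∧ ξˢ ∧ ζ`, and `ζ` is indivisible. -/
theorem stmt3 (V : Type*) [AddCommGroup V] [Module ℝ V] [FiniteDimensional ℝ V]
    (p : ℕ) (hp1 : 1 ≤ p) (hpn : p ≤ Module.finrank ℝ V)
    (μ : ExteriorAlgebra ℝ (Module.Dual ℝ V))
    (hμdeg : μ ∈ ⋀[ℝ]^p (Module.Dual ℝ V)) (hμ0 : μ ≠ 0)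
    (s : ℕ) (hs : s = Module.finrank ℝ (divForms V μ))
    (b : Module.Basis (Fin (Module.finrank ℝ V)) ℝ (Module.Dual ℝ V))
    (hb : ∀ i : Fin (Module.finrank ℝ V), (i : ℕ) < s → b i ∈ divForms V μ) :
    ∃ ζ : ExteriorAlgebra ℝ (Module.Dual ℝ V),
      ζ ∈ ⋀[ℝ]^(p - s) (Module.Dual ℝ V) ∧
      ζ ∈ Submodule.span ℝ
        {z : ExteriorAlgebra ℝ (Module.Dual ℝ V) |
          ∃ g : Fin (p - s) → Fin (Module.finrank ℝ V),
            (∀ j, s ≤ ((g j : ℕ))) ∧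
            z = (List.ofFn fun j => ExteriorAlgebra.ι ℝ (b (g j))).prod} ∧
      μ = (List.ofFn fun i : Fin (Module.finrank ℝ V) =>
            if (i : ℕ) < s then ExteriorAlgebra.ι ℝ (b i) else 1).prod * ζ ∧
      (∀ ξ : Module.Dual ℝ V, ξ ≠ 0 → ExteriorAlgebra.ι ℝ ξ * ζ ≠ 0) :=
  stmt3_general V p μ hμdeg hμ0 s hs b hb
end

section
/- Let μ be a nonzero exterior p-form (1 ≤ p ≤ n) on an n-dimensional real vector space V, let D be its divisibility space, let D′ = {ξ ∈ V* : ξ ∧ μ = 0}, and let s = dim D′. Suppose μ = ξ¹ ∧ … ∧ ξˢ ∧ ζ and μ = η¹ ∧ … ∧ ηˢ ∧ ζ′, where (ξ¹, …, ξˢ) and (η¹, …, ηˢ) are bases of D′ and ζ, ζ′ are exterior (p−s)-forms on V. Then the restrictions of ζ and ζ′ to the subspace D (as alternating (p−s)-linear forms on D) satisfy ζ|_D = c · ζ′|_D for some nonzero real number c. -/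
set_option synthInstance.maxHeartbeats 1000000
set_option maxHeartbeats 1000000

/-- Restriction of an exterior form on `V` to the subspace `D ⊆ V`: the image under the
algebra map induced by the dual of the inclusion `D → V`. -/
noncomputable def restrictForm (V : Type*) [AddCommGroup V] [Module ℝ V]
    (D : Submodule ℝ V) (ζ : ExteriorAlgebra ℝ (Module.Dual ℝ V)) :
    ExteriorAlgebra ℝ (Module.Dual ℝ D) :=
  ExteriorAlgebra.map (D.subtype.dualMap) ζ

/-!
Write `Ξ = ξ¹ ∧ ⋯ ∧ ξˢ` and `H = η¹ ∧ ⋯ ∧ ηˢ`. Since the `ηⁱ` lie in the span of the `ξⁱ`,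
`H = c • Ξ` for a determinant `c`, and `c ≠ 0` because `μ = H ∧ ζ′ ≠ 0`; hence
`Ξ ∧ (ζ - c • ζ′) = 0`. If `Ξ ∧ ω = 0`, then `ω` lies in the ideal generated by the `ξⁱ`: for a
dual family `(dᵢ)`, the map `y ↦ y - ξ¹ ∧ (d₁ ⌋ y)` kills `ξ¹ ∧ _`, commutes with `ξʲ ∧ _` for
`j ≠ 1` and changes `y` only by a multiple of `ξ¹`, so induction on `s` applies. Restriction to
`D` kills every `ξⁱ ∈ D′`.
-/

open ExteriorAlgebra

theorem AlternatingMap.apply_eq_basis_det_smul {R M N ι : Type*} [CommRing R]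
    [AddCommGroup M] [Module R M] [AddCommGroup N] [Module R N] [Fintype ι] [DecidableEq ι]
    (e : Module.Basis ι R M) (f : M [⋀^ι]→ₗ[R] N) (v : ι → M) :
    f v = e.det v • f e := by
  have hf : f = (LinearMap.toSpanSingleton R N (f e)).compAlternatingMap e.det := by
    refine Module.Basis.ext_alternating e fun i hi => ?_
    let σ : Equiv.Perm ι := Equiv.ofBijective i (Finite.injective_iff_bijective.1 hi)
    change f (e ∘ σ) = (LinearMap.toSpanSingleton R N (f e)).compAlternatingMap e.det (e ∘ σ)
    simp [AlternatingMap.map_perm, Module.Basis.det_self, Units.smul_def]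
  simpa using congr($hf v)

theorem LinearIndependent.exists_dual_family {K W ι : Type*} [Field K] [AddCommGroup W]
    [Module K W] [DecidableEq ι] {v : ι → W} (hv : LinearIndependent K v) :
    ∃ d : ι → Module.Dual K W, ∀ i j, d i (v j) = if i = j then 1 else 0 := by
  let b := Module.Basis.span hv
  choose d hd using fun i => LinearMap.exists_extend (b.coord i)
  refine ⟨d, fun i j => ?_⟩
  have hbj : (b j : W) = v j := congrArg Subtype.val (Module.Basis.span_apply hv j)
  rw [← hbj, ← Submodule.subtype_apply, ← LinearMap.comp_apply, hd i,
    Module.Basis.coord_apply, Module.Basis.repr_self_apply]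
  exact if_congr eq_comm rfl rfl

namespace ExteriorAlgebra

variable {R M : Type*} [CommRing R] [AddCommGroup M] [Module R M]

theorem exists_prod_ofFn_ι_eq_smul {s : ℕ} {ξ η : Fin s → M} (hξ : LinearIndependent R ξ)
    (hη : ∀ i, η i ∈ Submodule.span R (Set.range ξ)) :
    ∃ c : R, (List.ofFn fun i => ι R (η i)).prod = c • (List.ofFn fun i => ι R (ξ i)).prod := by
  let b := Module.Basis.span hξ
  let g := (ιMulti R s).compLinearMap (Submodule.span R (Set.range ξ)).subtype
  have hb : (fun i => (b i : M)) = ξ :=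
    funext fun i => congrArg Subtype.val (Module.Basis.span_apply hξ i)
  refine ⟨b.det fun i => ⟨η i, hη i⟩, ?_⟩
  have := g.apply_eq_basis_det_smul b fun i => ⟨η i, hη i⟩
  simpa [g, ιMulti_apply, hb] using this

noncomputable def dropFactor (d : Module.Dual R M) (x : M) (y : ExteriorAlgebra R M) :
    ExteriorAlgebra R M :=
  y - ι R x * CliffordAlgebra.contractLeft d y

variable (d : Module.Dual R M) (x : M)

theorem dropFactor_eq_zero_of_ι_mul_eq_zero (hx : d x = 1) {y : ExteriorAlgebra R M}
    (hy : ι R x * y = 0) : dropFactor d x y = 0 := by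
  have := CliffordAlgebra.contractLeft_ι_mul (Q := 0) d x y
  rw [hy, map_zero, hx, one_smul] at this
  exact this.symm

theorem dropFactor_ι_mul {z : M} (hz : d z = 0) (y : ExteriorAlgebra R M) :
    dropFactor d x (ι R z * y) = ι R z * dropFactor d x y := by
  have hswap : ι R x * ι R z = -(ι R z * ι R x) := eq_neg_of_add_eq_zero_left (ι_add_mul_swap x z)
  have := CliffordAlgebra.contractLeft_ι_mul (Q := 0) d z y
  rw [hz, zero_smul, zero_sub] at this
  simp only [dropFactor, this, mul_neg, ← mul_assoc, hswap, neg_mul, neg_neg, mul_sub]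

theorem dropFactor_prod_ofFn_mul {s : ℕ} {z : Fin s → M} (hz : ∀ i, d (z i) = 0)
    (y : ExteriorAlgebra R M) :
    dropFactor d x ((List.ofFn fun i => ι R (z i)).prod * y)
      = (List.ofFn fun i => ι R (z i)).prod * dropFactor d x y := by
  induction s with
  | zero => simp
  | succ s ih =>
    simp only [List.ofFn_succ, List.prod_cons, mul_assoc, dropFactor_ι_mul d x (hz 0),
      ih fun i => hz i.succ]

theorem map_dropFactor {A : Type*} [Ring A] [Algebra R A] (f : ExteriorAlgebra R M →ₐ[R] A)
    (hx : f (ι R x) = 0) (y : ExteriorAlgebra R M) : f (dropFactor d x y) = f y := by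
  simp [dropFactor, hx]

theorem map_eq_zero_of_prod_ofFn_ι_mul_eq_zero {A : Type*} [Ring A] [Algebra R A] {s : ℕ}
    {ξ : Fin s → M} {d : Fin s → Module.Dual R M}
    (hd : ∀ i j, d i (ξ j) = if i = j then 1 else 0)
    {f : ExteriorAlgebra R M →ₐ[R] A} (hf : ∀ i, f (ι R (ξ i)) = 0)
    {ω : ExteriorAlgebra R M} (hω : (List.ofFn fun i => ι R (ξ i)).prod * ω = 0) :
    f ω = 0 := by
  induction s generalizing ω with
  | zero => simpa using congr(f $hω)
  | succ s ih =>
    rw [List.ofFn_succ, List.prod_cons, mul_assoc] at hω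
    have hdrop := dropFactor_eq_zero_of_ι_mul_eq_zero (d 0) (ξ 0) (by simp [hd]) hω
    rw [dropFactor_prod_ofFn_mul (d 0) (ξ 0) fun i => by simp [hd, (Fin.succ_ne_zero i).symm]]
      at hdrop
    have := ih (ξ := fun i => ξ i.succ) (d := fun i => d i.succ) (by simp [hd, Fin.succ_inj])
      (fun i => hf i.succ) hdrop
    rwa [map_dropFactor (d 0) (ξ 0) f (hf 0)] at this

end ExteriorAlgebra

theorem restrictForm_ι_eq_zero {V : Type*} [AddCommGroup V] [Module ℝ V] {D : Submodule ℝ V}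
    {θ : Module.Dual ℝ V} (hθ : θ ∈ D.dualAnnihilator) : restrictForm V D (ι ℝ θ) = 0 := by
  have : D.subtype.dualMap θ = 0 := by
    ext v
    exact (Submodule.mem_dualAnnihilator θ).mp hθ v v.2
  rw [restrictForm, map_apply_ι, this, map_zero]

theorem stmt4_general (V : Type*) [AddCommGroup V] [Module ℝ V]
    (μ : ExteriorAlgebra ℝ (Module.Dual ℝ V))
    (hμ0 : μ ≠ 0)
    (s : ℕ)
    (ξ η : Fin s → Module.Dual ℝ V)
    (hξli : LinearIndependent ℝ ξ)
    (hξsp : Submodule.span ℝ (Set.range ξ) = divForms V μ)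
    (hηsp : Submodule.span ℝ (Set.range η) = divForms V μ)
    (ζ ζ' : ExteriorAlgebra ℝ (Module.Dual ℝ V))
    (hμζ : μ = (List.ofFn fun i => ExteriorAlgebra.ι ℝ (ξ i)).prod * ζ)
    (hμζ' : μ = (List.ofFn fun i => ExteriorAlgebra.ι ℝ (η i)).prod * ζ') :
    ∃ c : ℝ, c ≠ 0 ∧
      restrictForm V (divSpace V μ) ζ = c • restrictForm V (divSpace V μ) ζ' := by
  have hξ : ∀ i, ξ i ∈ divForms V μ := fun i => hξsp ▸ Submodule.subset_span ⟨i, rfl⟩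
  have hη : ∀ i, η i ∈ divForms V μ := fun i => hηsp ▸ Submodule.subset_span ⟨i, rfl⟩
  obtain ⟨c, hc⟩ := exists_prod_ofFn_ι_eq_smul hξli fun i => hξsp ▸ hη i
  have hc0 : c ≠ 0 := by
    rintro rfl
    exact hμ0 (by rw [hμζ', hc, zero_smul, zero_mul])
  have hzero : (List.ofFn fun i => ι ℝ (ξ i)).prod * (ζ - c • ζ') = 0 := by
    rw [mul_sub, mul_smul_comm, ← smul_mul_assoc, ← hc, ← hμζ, ← hμζ', sub_self]
  obtain ⟨d, hd⟩ := hξli.exists_dual_family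
  have hres := map_eq_zero_of_prod_ofFn_ι_mul_eq_zero hd
    (fun i => restrictForm_ι_eq_zero (Submodule.le_dualCoannihilator_dualAnnihilator _ (hξ i)))
    hzero
  refine ⟨c, hc0, sub_eq_zero.mp ?_⟩
  rwa [map_sub, map_smul] at hres

/-- With `μ` a nonzero exterior `p`-form, `D` its divisibility space,
`D′ = {ξ : ξ ∧ μ = 0}`, `s = dim D′`: if `μ = ξ¹ ∧ ⋯ ∧ ξˢ ∧ ζ = η¹ ∧ ⋯ ∧ ηˢ ∧ ζ′` for
bases `(ξⁱ)`, `(ηⁱ)` of `D′` and `(p-s)`-forms `ζ, ζ′`, then the restrictions of `ζ` and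
`ζ′` to `D` agree up to a nonzero constant factor. -/
theorem stmt4 (V : Type*) [AddCommGroup V] [Module ℝ V] [FiniteDimensional ℝ V]
    (p : ℕ) (hp1 : 1 ≤ p) (hpn : p ≤ Module.finrank ℝ V)
    (μ : ExteriorAlgebra ℝ (Module.Dual ℝ V))
    (hμdeg : μ ∈ ⋀[ℝ]^p (Module.Dual ℝ V)) (hμ0 : μ ≠ 0)
    (s : ℕ) (hs : s = Module.finrank ℝ (divForms V μ))
    (ξ η : Fin s → Module.Dual ℝ V)
    (hξli : LinearIndependent ℝ ξ)
    (hξsp : Submodule.span ℝ (Set.range ξ) = divForms V μ)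
    (hηli : LinearIndependent ℝ η)
    (hηsp : Submodule.span ℝ (Set.range η) = divForms V μ)
    (ζ ζ' : ExteriorAlgebra ℝ (Module.Dual ℝ V))
    (hζdeg : ζ ∈ ⋀[ℝ]^(p - s) (Module.Dual ℝ V))
    (hζ'deg : ζ' ∈ ⋀[ℝ]^(p - s) (Module.Dual ℝ V))
    (hμζ : μ = (List.ofFn fun i => ExteriorAlgebra.ι ℝ (ξ i)).prod * ζ)
    (hμζ' : μ = (List.ofFn fun i => ExteriorAlgebra.ι ℝ (η i)).prod * ζ') :
    ∃ c : ℝ, c ≠ 0 ∧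
      restrictForm V (divSpace V μ) ζ = c • restrictForm V (divSpace V μ) ζ' :=
  stmt4_general V μ hμ0 s ξ η hξli hξsp hηsp ζ ζ' hμζ hμζ'
end

section
/- Let μ be a nonzero exterior p-form (1 ≤ p ≤ n) on an n-dimensional real vector space V, let D be its divisibility space, let D′ = {ξ ∈ V* : ξ ∧ μ = 0}, and let s = dim D′. If μ = ξ¹ ∧ … ∧ ξˢ ∧ ζ for some basis (ξ¹, …, ξˢ) of D′ and some exterior (p−s)-form ζ on V, then the restriction of ζ to D is indivisible as an exterior (p−s)-form on the vector space D: for every nonzero linear functional η on D, η ∧ (ζ|_D) ≠ 0. -/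
/-!
Write `Ξ = ξ¹ ∧ ⋯ ∧ ξˢ`. Every `w ∈ D′` satisfies `w ∧ Ξ = 0`, so `Ξ ∧ x` only depends on `x`
modulo the ideal generated by `D′`. Let `r : V* → D*` be restriction and `j : D* → V*` any
extension; since `D′ = D^⊥`, `φ - j (r φ) ∈ D′`, hence `Ξ ∧ x = Ξ ∧ (j ∘ r)_* x` for every `x`.
If `η ∧ ζ|_D = 0`, then for `η̃ = j η` this gives `Ξ ∧ η̃ ∧ ζ = Ξ ∧ j_*(η ∧ ζ|_D) = 0`, so
`η̃ ∧ μ = ±Ξ ∧ η̃ ∧ ζ = 0`. Thus `η̃ ∈ D′` vanishes on `D`, i.e. `η = r η̃ = 0`.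
-/

set_option synthInstance.maxHeartbeats 1000000
set_option maxHeartbeats 1000000

open ExteriorAlgebra
open CliffordAlgebra (involute involute_ι involute_involute)

namespace ExteriorAlgebra

variable {R M : Type*} [CommRing R] [AddCommGroup M] [Module R M]

theorem mul_ι_eq_ι_mul_involute (x : ExteriorAlgebra R M) (m : M) :
    x * ι R m = ι R m * involute x := by
  induction x using ExteriorAlgebra.induction with
  | algebraMap r => rw [involute.commutes, Algebra.commutes]
  | ι n => rw [involute_ι, mul_neg, eq_neg_iff_add_eq_zero, ι_add_mul_swap]
  | mul a b ha hb => rw [map_mul, mul_assoc, hb, ← mul_assoc, ha, mul_assoc]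
  | add a b ha hb => rw [map_add, add_mul, ha, hb, mul_add]

theorem involute_mul_ι (x : ExteriorAlgebra R M) (m : M) :
    involute x * ι R m = ι R m * x := by
  rw [mul_ι_eq_ι_mul_involute, involute_involute]

theorem ι_mul_prod_ofFn_eq_zero_of_mem_span {n : ℕ} (f : Fin n → M) {w : M}
    (hw : w ∈ Submodule.span R (Set.range f)) :
    ι R w * (List.ofFn fun i => ι R (f i)).prod = 0 := by
  induction hw using Submodule.span_induction with
  | mem x hx =>
    obtain ⟨i, rfl⟩ := hx
    exact ι_mul_prod_list f i
  | zero => rw [map_zero, zero_mul]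
  | add x y _ _ hx hy => rw [map_add, add_mul, hx, hy, add_zero]
  | smul c x _ hx => rw [map_smul, smul_mul_assoc, hx, smul_zero]

theorem mul_map_eq_of_mul_ι_eq_zero {N : Submodule R M} {f : M →ₗ[R] M}
    (hf : ∀ m, m - f m ∈ N) {Ξ : ExteriorAlgebra R M} (hΞ : ∀ w ∈ N, Ξ * ι R w = 0)
    (x : ExteriorAlgebra R M) : Ξ * map f x = Ξ * x := by
  induction x using ExteriorAlgebra.induction generalizing Ξ with
  | algebraMap r => rw [AlgHom.commutes]
  | ι m =>
    rw [map_apply_ι, eq_comm, ← sub_eq_zero, ← mul_sub, ← map_sub]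
    exact hΞ _ (hf m)
  | mul a b ha hb =>
    have hΞa : ∀ w ∈ N, Ξ * map f a * ι R w = 0 := fun w hw => by
      rw [mul_assoc, mul_ι_eq_ι_mul_involute, ← mul_assoc, hΞ w hw, zero_mul]
    rw [map_mul, ← mul_assoc, hb hΞa, ha hΞ, mul_assoc]
  | add a b ha hb => rw [map_add, mul_add, mul_add, ha hΞ, hb hΞ]

end ExteriorAlgebra

section DivisibilitySpace

variable {V : Type*} [AddCommGroup V] [Module ℝ V]

theorem mem_divForms_iff {μ : ExteriorAlgebra ℝ (Module.Dual ℝ V)} {w : Module.Dual ℝ V} :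
    w ∈ divForms V μ ↔ ι ℝ w * μ = 0 :=
  Iff.rfl

theorem dualAnnihilator_divSpace (μ : ExteriorAlgebra ℝ (Module.Dual ℝ V))
    [FiniteDimensional ℝ (divForms V μ)] :
    (divSpace V μ).dualAnnihilator = divForms V μ :=
  Subspace.dualCoannihilator_dualAnnihilator_eq

end DivisibilitySpace

theorem stmt5_general (V : Type*) [AddCommGroup V] [Module ℝ V]
    (μ : ExteriorAlgebra ℝ (Module.Dual ℝ V))
    (s : ℕ)
    (ξ : Fin s → Module.Dual ℝ V)
    (hξsp : Submodule.span ℝ (Set.range ξ) = divForms V μ)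
    (ζ : ExteriorAlgebra ℝ (Module.Dual ℝ V))
    (hμζ : μ = (List.ofFn fun i => ExteriorAlgebra.ι ℝ (ξ i)).prod * ζ) :
    ∀ η : Module.Dual ℝ (divSpace V μ), η ≠ 0 →
      ExteriorAlgebra.ι ℝ η * restrictForm V (divSpace V μ) ζ ≠ 0 := by
  have : FiniteDimensional ℝ (divForms V μ) := hξsp ▸ .span_of_finite ℝ (Set.finite_range ξ)
  set D := divSpace V μ
  intro η hη hηζ
  obtain ⟨j, hj⟩ := D.dualRestrict.exists_rightInverse_of_surjective
    (LinearMap.range_eq_top.2 (LinearMap.dualMap_surjective_of_injective D.injective_subtype))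
  have hrj (η' : Module.Dual ℝ D) : D.dualRestrict (j η') = η' := LinearMap.congr_fun hj η'
  have hjr (φ : Module.Dual ℝ V) : φ - j (D.dualRestrict φ) ∈ divForms V μ := by
    rw [← dualAnnihilator_divSpace, ← Submodule.dualRestrict_ker_eq_dualAnnihilator,
      LinearMap.mem_ker, map_sub, hrj, sub_self]
  set Ξ := (List.ofFn fun i => ι ℝ (ξ i)).prod
  have hΞ : ∀ w ∈ divForms V μ, involute Ξ * ι ℝ w = 0 := fun w hw => by
    rw [involute_mul_ι, ι_mul_prod_ofFn_eq_zero_of_mem_span ξ (hξsp ▸ hw)]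
  have hΞηζ : involute Ξ * (ι ℝ (j η) * ζ) = 0 := by
    rw [← mul_map_eq_of_mul_ι_eq_zero (f := j ∘ₗ D.dualRestrict) hjr hΞ, ← map_comp_map,
      AlgHom.comp_apply, map_mul, map_apply_ι, hrj]
    rw [show map D.dualRestrict ζ = restrictForm V D ζ from rfl, hηζ, map_zero, mul_zero]
  have hjη : j η ∈ divForms V μ := by
    rw [mem_divForms_iff, hμζ, ← mul_assoc, ← involute_mul_ι, mul_assoc, hΞηζ]
  apply hη
  rw [← hrj η, ← LinearMap.mem_ker, Submodule.dualRestrict_ker_eq_dualAnnihilator,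
    dualAnnihilator_divSpace]
  exact hjη

/-- With `μ` a nonzero exterior `p`-form, `D` its divisibility space,
`D′ = {ξ : ξ ∧ μ = 0}`, `s = dim D′`: if `μ = ξ¹ ∧ ⋯ ∧ ξˢ ∧ ζ` for a basis `(ξⁱ)` of `D′`
and a `(p-s)`-form `ζ`, then the restriction of `ζ` to `D` is indivisible: its wedge with
every nonzero linear functional on `D` is nonzero. -/
theorem stmt5 (V : Type*) [AddCommGroup V] [Module ℝ V] [FiniteDimensional ℝ V]
    (p : ℕ) (hp1 : 1 ≤ p) (hpn : p ≤ Module.finrank ℝ V)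
    (μ : ExteriorAlgebra ℝ (Module.Dual ℝ V))
    (hμdeg : μ ∈ ⋀[ℝ]^p (Module.Dual ℝ V)) (hμ0 : μ ≠ 0)
    (s : ℕ) (hs : s = Module.finrank ℝ (divForms V μ))
    (ξ : Fin s → Module.Dual ℝ V)
    (hξli : LinearIndependent ℝ ξ)
    (hξsp : Submodule.span ℝ (Set.range ξ) = divForms V μ)
    (ζ : ExteriorAlgebra ℝ (Module.Dual ℝ V))
    (hζdeg : ζ ∈ ⋀[ℝ]^(p - s) (Module.Dual ℝ V))
    (hμζ : μ = (List.ofFn fun i => ExteriorAlgebra.ι ℝ (ξ i)).prod * ζ) :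
    ∀ η : Module.Dual ℝ (divSpace V μ), η ≠ 0 →
      ExteriorAlgebra.ι ℝ η * restrictForm V (divSpace V μ) ζ ≠ 0 :=
  stmt5_general V μ s ξ hξsp ζ hμζ
end
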